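/- (Section 5.5, osp(2m+1|2)) Let λ ∈ 𝒫 and 1 ≤ k ≤ m with ⟨λ+ρ, δ+ε_k⟩ = 0 and λ_k ≠ 0. Let t be the largest index with k ≤ t ≤ m and λ_t = λ_k, and set φ(λ) = λ − (t−k+1)δ − Σ_{i=k}^{t} ε_i. Then φ(λ) ∈ 𝒫 and λ ∼ φ(λ). -/

import Mathlib

open Finset
open Fin.NatCast

/-- The standard basis vector `ε_i` of `ℚ^{1+m}` (with `ε_0 = δ`). -/
noncomputable def eps (m i : ℕ) : Fin (m+1) → ℚ := Pi.single (i : Fin (m+1)) 1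

/-- The bilinear form `⟨λ, μ⟩ = −λ₀μ₀ + Σ_{i=1}^m λ_i μ_i` on `ℚ^{1+m}`. -/
noncomputable def form (m : ℕ) (l μ : Fin (m+1) → ℚ) : ℚ :=
  -(l 0 * μ 0) + ∑ i : Fin (m+1), (if i = 0 then 0 else l i * μ i)

/-- `ρ` for `osp(2m|2)`: `ρ₀ = 1−m`, `ρ_i = m−i`. -/
noncomputable def rhoD (m : ℕ) : Fin (m+1) → ℚ :=
  fun i => if i = 0 then 1 - (m : ℚ) else (m : ℚ) - (i : ℕ)

/-- `ρ` for `osp(2m+1|2)`: `ρ₀ = 1/2−m`, `ρ_i = m−i+1/2`. -/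
noncomputable def rhoB (m : ℕ) : Fin (m+1) → ℚ :=
  fun i => if i = 0 then 1/2 - (m : ℚ) else (m : ℚ) - (i : ℕ) + 1/2

/-- All coordinates are integers. -/
def IsIntegralWt (m : ℕ) (l : Fin (m+1) → ℚ) : Prop := ∀ i, ∃ z : ℤ, l i = z

/-- Dominant integral weights for `osp(2m|2)`. -/
def PD (m : ℕ) (l : Fin (m+1) → ℚ) : Prop :=
  IsIntegralWt m l ∧ 0 ≤ l 0 ∧
  (∀ i j : ℕ, 1 ≤ i → i ≤ j → j ≤ m - 1 → l (j : Fin (m+1)) ≤ l (i : Fin (m+1))) ∧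
  |l (m : Fin (m+1))| ≤ l ((m - 1 : ℕ) : Fin (m+1)) ∧
  (∀ i : ℕ, 1 ≤ i → i ≤ m - 1 → 0 ≤ l (i : Fin (m+1))) ∧
  (∀ i : ℕ, 1 ≤ i → i ≤ m → l 0 < (i : ℚ) → l (i : Fin (m+1)) = 0)

/-- Dominant integral weights for `osp(2m+1|2)`. -/
def PB (m : ℕ) (l : Fin (m+1) → ℚ) : Prop :=
  IsIntegralWt m l ∧ 0 ≤ l 0 ∧
  (∀ i j : ℕ, 1 ≤ i → i ≤ j → j ≤ m → l (j : Fin (m+1)) ≤ l (i : Fin (m+1))) ∧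
  (∀ i : ℕ, 1 ≤ i → i ≤ m → 0 ≤ l (i : Fin (m+1))) ∧
  (∀ i : ℕ, 1 ≤ i → i ≤ m → l 0 < (i : ℚ) → l (i : Fin (m+1)) = 0)

/-- `λ` is atypical (w.r.t. a given `ρ`): `⟨λ+ρ, δ+s·ε_i⟩ = 0` for some `1 ≤ i ≤ m`, `s = ±1`. -/
def Atyp (m : ℕ) (ρ l : Fin (m+1) → ℚ) : Prop :=
  ∃ i : ℕ, 1 ≤ i ∧ i ≤ m ∧ ∃ s : ℚ, (s = 1 ∨ s = -1) ∧
    form m (l + ρ) (eps m 0 + s • eps m i) = 0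

abbrev GLQ (m : ℕ) := (Fin (m+1) → ℚ) ≃ₗ[ℚ] (Fin (m+1) → ℚ)

/-- Permutations of the coordinates `1, …, m` (fixing coordinate `0`). -/
def permSet (m : ℕ) : Set (GLQ m) :=
  {w | ∃ σ : Equiv.Perm (Fin (m+1)), σ 0 = 0 ∧ ∀ v, w v = v ∘ σ}

/-- The sign change of coordinate `0`. -/
def flip0Set (m : ℕ) : Set (GLQ m) :=
  {w | ∀ v k, w v k = if k = 0 then -(v k) else v k}

/-- Simultaneous sign changes of two coordinates among `1, …, m`. -/
def doubleFlipSet (m : ℕ) : Set (GLQ m) :=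
  {w | ∃ i j : Fin (m+1), i ≠ 0 ∧ j ≠ 0 ∧ i ≠ j ∧
    ∀ v k, w v k = if k = i ∨ k = j then -(v k) else v k}

/-- Sign changes of a single coordinate among `1, …, m`. -/
def singleFlipSet (m : ℕ) : Set (GLQ m) :=
  {w | ∃ i : Fin (m+1), i ≠ 0 ∧ ∀ v k, w v k = if k = i then -(v k) else v k}

/-- The Weyl group for `osp(2m|2)`. -/
def WD (m : ℕ) : Subgroup (GLQ m) :=
  Subgroup.closure (permSet m ∪ doubleFlipSet m ∪ flip0Set m)

/-- The Weyl group for `osp(2m+1|2)`. -/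
def WB (m : ℕ) : Subgroup (GLQ m) :=
  Subgroup.closure (permSet m ∪ singleFlipSet m ∪ flip0Set m)

/-- The block equivalence: the smallest equivalence relation with
`μ ∼ μ+α` for odd roots `α = ±(δ±ε_i)` with `⟨μ+ρ, α⟩ = 0`, and
`μ ∼ w(μ+ρ)−ρ` for `w ∈ W`. -/
def blockRel (m : ℕ) (ρ : Fin (m+1) → ℚ) (W : Subgroup (GLQ m)) :
    (Fin (m+1) → ℚ) → (Fin (m+1) → ℚ) → Prop :=
  Relation.EqvGen (fun μ ν =>
    (∃ i : ℕ, 1 ≤ i ∧ i ≤ m ∧ ∃ s t : ℚ, (s = 1 ∨ s = -1) ∧ (t = 1 ∨ t = -1) ∧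
      form m (μ + ρ) (t • (eps m 0 + s • eps m i)) = 0 ∧
      ν = μ + t • (eps m 0 + s • eps m i)) ∨
    (∃ w ∈ W, ν = w (μ + ρ) - ρ))

def blockD (m : ℕ) : (Fin (m+1) → ℚ) → (Fin (m+1) → ℚ) → Prop :=
  blockRel m (rhoD m) (WD m)

def blockB (m : ℕ) : (Fin (m+1) → ℚ) → (Fin (m+1) → ℚ) → Prop :=
  blockRel m (rhoB m) (WB m)

/-- The set `𝒫_λ = 𝒫_{λ+} ∪ 𝒫_{λ−}` for `osp(2m|2)`. -/
noncomputable def PlamD (m : ℕ) (l : Fin (m+1) → ℚ) : Set (Fin (m+1) → ℚ) :=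
  {μ | PD m μ ∧
    (μ = l + eps m 0 ∨ μ = l - eps m 0 ∨
     (∃ i : ℕ, 1 ≤ i ∧ i ≤ m - 1 ∧ (μ = l + eps m i ∨ μ = l - eps m i)) ∨
     (0 ≤ l (m : Fin (m+1)) ∧ μ = l + eps m m) ∨
     (l (m : Fin (m+1)) ≤ 0 ∧ μ = l - eps m m) ∨
     (l (m : Fin (m+1)) < 0 ∧ μ = l + eps m m) ∨
     (0 < l (m : Fin (m+1)) ∧ μ = l - eps m m))}

/-- The set `𝒫_λ = 𝒫_{λ+} ∪ 𝒫_{λ−}` for `osp(2m+1|2)`. -/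
noncomputable def PlamB (m : ℕ) (l : Fin (m+1) → ℚ) : Set (Fin (m+1) → ℚ) :=
  {μ | PB m μ ∧
    ((∃ i : ℕ, i ≤ m ∧ (μ = l + eps m i ∨ μ = l - eps m i)) ∨
     (l (m : Fin (m+1)) ≠ 0 ∧ μ = l))}

/-- The weight `λ^{j,q}`. -/
noncomputable def lamJQ (m : ℕ) (l : Fin (m+1) → ℚ) (l0 j : ℕ) (q : ℤ) : Fin (m+1) → ℚ :=
  ((j : ℚ) - (q : ℚ)) • eps m 0 + (∑ i ∈ Finset.Icc 1 j, l (i : Fin (m+1)) • eps m i) +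
    (q : ℚ) • eps m (j + 1) +
    ∑ i ∈ Finset.Icc (j+1) l0, (l (i : Fin (m+1)) + 1) • eps m (i+1)

/-- The weight `λ^{j,q}_−`. -/
noncomputable def lamJQm (m : ℕ) (l : Fin (m+1) → ℚ) (l0 j : ℕ) (q : ℤ) : Fin (m+1) → ℚ :=
  ((j : ℚ) - (q : ℚ)) • eps m 0 + (∑ i ∈ Finset.Icc 1 j, l (i : Fin (m+1)) • eps m i) +
    (q : ℚ) • eps m (j + 1) +
    (∑ i ∈ Finset.Icc (j+1) (l0 - 1), (l (i : Fin (m+1)) + 1) • eps m (i+1)) -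
    (l (l0 : Fin (m+1)) + 1) • eps m (l0 + 1)

/-- `λ^δ` for `osp(2m|2)`: coordinate `0` becomes `2m−2−λ₀`. -/
noncomputable def deltaD (m : ℕ) (l : Fin (m+1) → ℚ) : Fin (m+1) → ℚ :=
  fun i => if i = 0 then 2*(m : ℚ) - 2 - l 0 else l i

/-- `λ^δ` for `osp(2m+1|2)`: coordinate `0` becomes `2m−1−λ₀`. -/
noncomputable def deltaB (m : ℕ) (l : Fin (m+1) → ℚ) : Fin (m+1) → ℚ :=
  fun i => if i = 0 then 2*(m : ℚ) - 1 - l 0 else l i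

/-!
Atypicality `⟨λ+ρ, δ+ε_k⟩ = 0` reads `λ₀ = λ_k + 2m − k`. Subtracting the odd root `δ+ε_k`
lowers `λ₀` by one while `ρ_{k+1} = ρ_k − 1`; as long as `λ_{k+1} = λ_k`, the new weight is
`(δ+ε_{k+1})`-atypical, so the odd reflections `δ+ε_k, …, δ+ε_t` can be applied one after the other
and link `λ` to `φ(λ)`. Dominance of `φ(λ)` holds because `t` is the end of the plateau of `λ_k`,
where the coordinates drop by at least one, and `φ(λ)₀ = λ_k + 2m − t − 1 ≥ m`.
-/

section Weights

variable {m : ℕ}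

lemma natCast_fin_eq_natCast_iff {i j : ℕ} (hi : i ≤ m) (hj : j ≤ m) :
    (i : Fin (m+1)) = j ↔ i = j := by
  rw [Fin.ext_iff, Fin.val_cast_of_lt (by omega), Fin.val_cast_of_lt (by omega)]

lemma natCast_fin_ne_zero {i : ℕ} (hi1 : 1 ≤ i) (hi : i ≤ m) : (i : Fin (m+1)) ≠ 0 := by
  simpa using (natCast_fin_eq_natCast_iff hi (Nat.zero_le m)).not.mpr (by omega)

lemma eps_apply_natCast {i j : ℕ} (hi : i ≤ m) (hj : j ≤ m) :
    eps m i (j : Fin (m+1)) = if i = j then 1 else 0 := by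
  simp only [eps, Pi.single_apply, natCast_fin_eq_natCast_iff hj hi, eq_comm]

lemma sum_eps_apply_natCast {s : Finset ℕ} (hs : ∀ i ∈ s, i ≤ m) {j : ℕ} (hj : j ≤ m) :
    (∑ i ∈ s, eps m i) (j : Fin (m+1)) = if j ∈ s then 1 else 0 := by
  rw [Finset.sum_apply, Finset.sum_congr rfl fun i hi => eps_apply_natCast (hs i hi) hj,
    Finset.sum_ite_eq']

lemma form_smul_right (v w : Fin (m+1) → ℚ) (c : ℚ) :
    form m v (c • w) = c * form m v w := by
  simp only [form, Pi.smul_apply, smul_eq_mul, mul_add, Finset.mul_sum, mul_ite, mul_zero]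
  congr 1
  · ring
  · exact Finset.sum_congr rfl fun i _ => by split_ifs <;> ring

lemma form_eps_zero_add_eps (v : Fin (m+1) → ℚ) {i : ℕ} (hi1 : 1 ≤ i) (hi : i ≤ m) :
    form m v (eps m 0 + eps m i) = v i - v 0 := by
  have hi0 := natCast_fin_ne_zero hi1 hi
  rw [form, Finset.sum_eq_single (i : Fin (m+1))]
  · simp only [eps, Nat.cast_zero, Pi.add_apply, Pi.single_eq_same, Pi.single_eq_of_ne hi0,
      Pi.single_eq_of_ne hi0.symm, add_zero, zero_add, mul_one, hi0, if_false]
    ring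
  · intro j _ hj
    by_cases hj0 : j = 0 <;> simp [eps, hj0, hj]
  · simp

lemma form_add_rhoB_eps_zero_add_eps (v : Fin (m+1) → ℚ) {i : ℕ} (hi1 : 1 ≤ i) (hi : i ≤ m) :
    form m (v + rhoB m) (eps m 0 + eps m i) = v i - v 0 + 2 * m - i := by
  have hi0 := natCast_fin_ne_zero hi1 hi
  rw [form_eps_zero_add_eps _ hi1 hi]
  simp only [Pi.add_apply, rhoB, hi0, if_true, if_false, Fin.val_cast_of_lt (by omega : i < m + 1)]
  ring

lemma IsIntegralWt.sub {l μ : Fin (m+1) → ℚ} (hl : IsIntegralWt m l) (hμ : IsIntegralWt m μ) :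
    IsIntegralWt m (l - μ) := by
  intro i
  obtain ⟨a, ha⟩ := hl i
  obtain ⟨b, hb⟩ := hμ i
  exact ⟨a - b, by simp [ha, hb]⟩

lemma IsIntegralWt.natCast_smul {l : Fin (m+1) → ℚ} (hl : IsIntegralWt m l) (n : ℕ) :
    IsIntegralWt m ((n : ℚ) • l) := by
  intro i
  obtain ⟨a, ha⟩ := hl i
  exact ⟨n * a, by simp [ha]⟩

lemma IsIntegralWt.sum {ι : Type*} {s : Finset ι} {l : ι → Fin (m+1) → ℚ}
    (hl : ∀ i ∈ s, IsIntegralWt m (l i)) : IsIntegralWt m (∑ i ∈ s, l i) := by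
  intro j
  choose a ha using hl
  exact ⟨∑ i ∈ s.attach, a i.1 i.2 j, by simp [Finset.sum_apply, ← Finset.sum_attach s, ha]⟩

lemma isIntegralWt_eps (i : ℕ) : IsIntegralWt m (eps m i) := by
  intro j
  by_cases h : j = i
  · exact ⟨1, by simp [eps, h]⟩
  · exact ⟨0, by simp [eps, h]⟩

lemma IsIntegralWt.add_one_le_of_lt {l : Fin (m+1) → ℚ} (hl : IsIntegralWt m l) {i j : Fin (m+1)}
    (h : l i < l j) : l i + 1 ≤ l j := by
  obtain ⟨a, ha⟩ := hl i
  obtain ⟨b, hb⟩ := hl j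
  rw [ha, hb] at h ⊢
  exact_mod_cast Int.add_one_le_of_lt (by exact_mod_cast h)

lemma IsIntegralWt.one_le_of_pos {l : Fin (m+1) → ℚ} (hl : IsIntegralWt m l) {i : Fin (m+1)}
    (h : 0 < l i) : 1 ≤ l i := by
  obtain ⟨a, ha⟩ := hl i
  rw [ha] at h ⊢
  exact_mod_cast (show (0 : ℤ) < a by exact_mod_cast h)

end Weights

lemma blockRel_sub_of_form_eq_zero {m : ℕ} {ρ : Fin (m+1) → ℚ} {W : Subgroup (GLQ m)}
    {μ : Fin (m+1) → ℚ} {i : ℕ} (hi1 : 1 ≤ i) (hi : i ≤ m)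
    (h : form m (μ + ρ) (eps m 0 + eps m i) = 0) :
    blockRel m ρ W μ (μ - eps m 0 - eps m i) :=
  Relation.EqvGen.rel _ _ <| Or.inl ⟨i, hi1, hi, 1, -1, .inl rfl, .inr rfl,
    by rw [form_smul_right, one_smul, h, mul_zero], by module⟩

/-- `λ − nδ − (ε_k + ⋯ + ε_{k+n−1})`: the result of the `n` odd reflections along
`δ+ε_k, …, δ+ε_{k+n−1}`; `φ(λ)` is the case `n = t − k + 1`. -/
noncomputable def oddDescent (m : ℕ) (l : Fin (m+1) → ℚ) (k n : ℕ) : Fin (m+1) → ℚ :=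
  l - (n : ℚ) • eps m 0 - ∑ i ∈ Finset.Ico k (k + n), eps m i

section OddDescent

variable {m : ℕ} {l : Fin (m+1) → ℚ} {k n : ℕ}

lemma oddDescent_apply_zero (hk1 : 1 ≤ k) (hkn : k + n ≤ m + 1) :
    oddDescent m l k n 0 = l 0 - n := by
  have := sum_eps_apply_natCast (m := m) (s := Finset.Ico k (k + n))
    (fun i hi => by simp only [Finset.mem_Ico] at hi; omega) (Nat.zero_le m)
  simp only [Nat.cast_zero, Finset.mem_Ico] at this
  rw [oddDescent, Pi.sub_apply, Pi.sub_apply, this, if_neg (by omega)]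
  simp [eps]

lemma oddDescent_apply_natCast (hkn : k + n ≤ m + 1) {j : ℕ} (hj1 : 1 ≤ j) (hj : j ≤ m) :
    oddDescent m l k n j = l j - if j ∈ Finset.Ico k (k + n) then 1 else 0 := by
  rw [oddDescent, Pi.sub_apply, sum_eps_apply_natCast _ hj]
  · simp [eps, natCast_fin_ne_zero hj1 hj]
  · intro i hi; simp only [Finset.mem_Ico] at hi; omega

lemma oddDescent_succ :
    oddDescent m l k (n + 1) = oddDescent m l k n - eps m 0 - eps m (k + n) := by
  rw [oddDescent, oddDescent, ← add_assoc, Finset.sum_Ico_succ_top (by omega)]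
  push_cast
  module

theorem blockB_oddDescent (hk1 : 1 ≤ k) (hkn : k + n ≤ m + 1)
    (hconst : ∀ j, k ≤ j → j < k + n → l j = l k)
    (hat : form m (l + rhoB m) (eps m 0 + eps m k) = 0) :
    blockB m l (oddDescent m l k n) := by
  induction n with
  | zero =>
    rw [show oddDescent m l k 0 = l by simp [oddDescent]]
    exact Relation.EqvGen.refl l
  | succ n ih =>
    have hat_next : form m (oddDescent m l k n + rhoB m) (eps m 0 + eps m (k + n)) = 0 := by
      rw [form_add_rhoB_eps_zero_add_eps _ hk1 (by omega)] at hat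
      rw [form_add_rhoB_eps_zero_add_eps _ (by omega) (by omega),
        oddDescent_apply_natCast (by omega) (by omega) (by omega), if_neg (by simp),
        oddDescent_apply_zero hk1 (by omega), hconst _ (by omega) (by omega)]
      push_cast
      linarith
    rw [oddDescent_succ]
    exact (ih (by omega) fun j hj hjn => hconst j hj (by omega)).trans _ _ _
      (blockRel_sub_of_form_eq_zero (by omega) (by omega) hat_next)

theorem PB.oddDescent (hP : PB m l) (hk1 : 1 ≤ k) (hkn : k + n ≤ m + 1)
    (hconst : ∀ j, k ≤ j → j < k + n → l j = l k)
    (hdrop : ∀ j, k + n ≤ j → j ≤ m → l j < l k)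
    (hlk : 1 ≤ l k) (hl0 : (m : ℚ) + n ≤ l 0) :
    PB m (oddDescent m l k n) := by
  obtain ⟨hint, -, hmono, hnonneg, -⟩ := hP
  have hφ0 := oddDescent_apply_zero (l := l) hk1 hkn
  refine ⟨?_, ?_, ?_, ?_, ?_⟩
  · exact (hint.sub ((isIntegralWt_eps 0).natCast_smul n)).sub
      (IsIntegralWt.sum fun i _ => isIntegralWt_eps i)
  · rw [hφ0]
    linarith
  · intro i j hi1 hij hj
    rw [oddDescent_apply_natCast hkn hi1 (by omega), oddDescent_apply_natCast hkn (by omega) hj]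
    have hlij := hmono i j hi1 hij hj
    simp only [Finset.mem_Ico]
    split_ifs with hjB hiB hiB
    · linarith
    · linarith
    · linarith [hconst i hiB.1 hiB.2, hint.add_one_le_of_lt (hdrop j (by omega) hj)]
    · linarith
  · intro i hi1 hi
    rw [oddDescent_apply_natCast hkn hi1 hi]
    simp only [Finset.mem_Ico]
    split_ifs with hiB
    · linarith [hconst i hiB.1 hiB.2]
    · linarith [hnonneg i hi1 hi]
  · intro i _ hi hlt
    have : (i : ℚ) ≤ m := by exact_mod_cast hi
    linarith

end OddDescent

theorem phi_dominant_equiv_B_general (m : ℕ) (l : Fin (m+1) → ℚ) (hP : PB m l)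
    (k : ℕ) (hk1 : 1 ≤ k) (hkm : k ≤ m)
    (hat : form m (l + rhoB m) (eps m 0 + eps m k) = 0)
    (hlk : l (k : Fin (m+1)) ≠ 0)
    (t : ℕ) (htk : k ≤ t) (htm : t ≤ m)
    (ht : l (t : Fin (m+1)) = l (k : Fin (m+1)))
    (htmax : ∀ u : ℕ, t < u → u ≤ m → l (u : Fin (m+1)) ≠ l (k : Fin (m+1))) :
    PB m (l - ((t : ℚ) - (k : ℚ) + 1) • eps m 0 - ∑ i ∈ Finset.Icc k t, eps m i) ∧
    blockB m l (l - ((t : ℚ) - (k : ℚ) + 1) • eps m 0 - ∑ i ∈ Finset.Icc k t, eps m i) := by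
  have hφ : l - ((t : ℚ) - (k : ℚ) + 1) • eps m 0 - ∑ i ∈ Finset.Icc k t, eps m i
      = oddDescent m l k (t - k + 1) := by
    rw [oddDescent, show k + (t - k + 1) = t + 1 by omega, Finset.Ico_add_one_right_eq_Icc,
      Nat.cast_add, Nat.cast_sub htk, Nat.cast_one]
  have ⟨hint, _, hmono, hnonneg, _⟩ := hP
  have hconst : ∀ j, k ≤ j → j < k + (t - k + 1) → l j = l k := fun j hkj hjt =>
    le_antisymm (hmono k j hk1 hkj (by omega)) (ht ▸ hmono j t (by omega) (by omega) htm)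
  have hdrop : ∀ j, k + (t - k + 1) ≤ j → j ≤ m → l j < l k := fun j htj hj =>
    lt_of_le_of_ne (ht ▸ hmono t j (by omega) (by omega) hj) (htmax j (by omega) hj)
  have hlk1 : 1 ≤ l k := hint.one_le_of_pos (lt_of_le_of_ne (hnonneg k hk1 hkm) hlk.symm)
  have hl0 : (m : ℚ) + (t - k + 1 : ℕ) ≤ l 0 := by
    rw [form_add_rhoB_eps_zero_add_eps _ hk1 hkm] at hat
    have : (t : ℚ) ≤ m := by exact_mod_cast htm
    push_cast [htk]
    linarith
  rw [hφ]
  exact ⟨hP.oddDescent hk1 (by omega) hconst hdrop hlk1 hl0,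
    blockB_oddDescent hk1 (by omega) hconst hat⟩

/-- Section 5.5 for `osp(2m+1|2)`: if `λ ∈ 𝒫` is `(δ+ε_k)`-atypical with `λ_k ≠ 0`,
and `t` is the largest index with `k ≤ t ≤ m` and `λ_t = λ_k`, then
`φ(λ) = λ − (t−k+1)δ − Σ_{i=k}^t ε_i ∈ 𝒫` and `λ ∼ φ(λ)`. -/
theorem phi_dominant_equiv_B (m : ℕ) (hm : 1 ≤ m) (l : Fin (m+1) → ℚ) (hP : PB m l)
    (k : ℕ) (hk1 : 1 ≤ k) (hkm : k ≤ m)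
    (hat : form m (l + rhoB m) (eps m 0 + eps m k) = 0)
    (hlk : l (k : Fin (m+1)) ≠ 0)
    (t : ℕ) (htk : k ≤ t) (htm : t ≤ m)
    (ht : l (t : Fin (m+1)) = l (k : Fin (m+1)))
    (htmax : ∀ u : ℕ, t < u → u ≤ m → l (u : Fin (m+1)) ≠ l (k : Fin (m+1))) :
    PB m (l - ((t : ℚ) - (k : ℚ) + 1) • eps m 0 - ∑ i ∈ Finset.Icc k t, eps m i) ∧
    blockB m l (l - ((t : ℚ) - (k : ℚ) + 1) • eps m 0 - ∑ i ∈ Finset.Icc k t, eps m i) :=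
  phi_dominant_equiv_B_general m l hP k hk1 hkm hat hlk t htk htm ht htmax
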